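/- Let m, m_φ, a, b, μ be nonzero complex numbers and W(z, χ, φ₋₁, φ₃, φ₋₃) = μ²z + (m/2)χ² + a z χ φ₋₁ + b z φ₃φ₋₃ + m_φ φ₋₁φ₃. Then W has no critical point: there is no point in ℂ⁵ at which all five partial derivatives of W vanish simultaneously. -/
import Mathlib


/-- A critical point of a function of five complex variables. -/
def IsCrit5 (W : ℂ → ℂ → ℂ → ℂ → ℂ → ℂ) (z χ φm1 φ3 φm3 : ℂ) : Prop :=
  deriv (fun t => W t χ φm1 φ3 φm3) z = 0 ∧
  deriv (fun t => W z t φm1 φ3 φm3) χ = 0 ∧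
  deriv (fun t => W z χ t φ3 φm3) φm1 = 0 ∧
  deriv (fun t => W z χ φm1 t φm3) φ3 = 0 ∧
  deriv (fun t => W z χ φm1 φ3 t) φm3 = 0

lemma deriv_affine' (c d x : ℂ) : deriv (fun t => c * t + d) x = c := by
  simpa using (((hasDerivAt_id x).const_mul c).add_const d).deriv

lemma deriv_quad' (p c d x : ℂ) : deriv (fun t => p * t ^ 2 + c * t + d) x = 2 * p * x + c := by
  have h : HasDerivAt (fun t : ℂ => p * t ^ 2 + c * t + d) (p * (2 * x) + c) x := by
    have h1 : HasDerivAt (fun t : ℂ => t ^ 2) (2 * x) x := by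
      simpa using (hasDerivAt_pow 2 x)
    have := (((h1.const_mul p).add ((hasDerivAt_id x).const_mul c)).add_const d)
    simpa using this
  rw [h.deriv]; ring

theorem stmt8 (m mφ a b μ : ℂ) (hm : m ≠ 0) (hmφ : mφ ≠ 0) (ha : a ≠ 0)
    (hb : b ≠ 0) (hμ : μ ≠ 0)
    (W : ℂ → ℂ → ℂ → ℂ → ℂ → ℂ)
    (hW : ∀ z χ φm1 φ3 φm3, W z χ φm1 φ3 φm3 =
      μ^2 * z + (m / 2) * χ^2 + a * z * χ * φm1 + b * z * φ3 * φm3 + mφ * φm1 * φ3) :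
    ¬ ∃ z χ φm1 φ3 φm3 : ℂ, IsCrit5 W z χ φm1 φ3 φm3 := by
  rintro ⟨z, χ, φm1, φ3, φm3, h1, h2, h3, h4, h5⟩
  have e1 : μ^2 + a * χ * φm1 + b * φ3 * φm3 = 0 := by
    have : deriv (fun t => (μ^2 + a * χ * φm1 + b * φ3 * φm3) * t
        + ((m/2) * χ^2 + mφ * φm1 * φ3)) z = 0 := by
      rw [show (fun t => (μ^2 + a * χ * φm1 + b * φ3 * φm3) * t
          + ((m/2) * χ^2 + mφ * φm1 * φ3)) = (fun t => W t χ φm1 φ3 φm3) from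
        funext fun t => by rw [hW]; ring]
      exact h1
    rwa [deriv_affine'] at this
  have e2 : m * χ + a * z * φm1 = 0 := by
    have : deriv (fun t => (m/2) * t ^ 2 + (a * z * φm1) * t
        + (μ^2 * z + b * z * φ3 * φm3 + mφ * φm1 * φ3)) χ = 0 := by
      rw [show (fun t => (m/2) * t ^ 2 + (a * z * φm1) * t
          + (μ^2 * z + b * z * φ3 * φm3 + mφ * φm1 * φ3)) = (fun t => W z t φm1 φ3 φm3) from
        funext fun t => by rw [hW]; ring]
      exact h2
    rw [deriv_quad'] at this
    field_simp at this ⊢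
    linear_combination this
  have e3 : a * z * χ + mφ * φ3 = 0 := by
    have : deriv (fun t => (a * z * χ + mφ * φ3) * t
        + (μ^2 * z + (m/2) * χ^2 + b * z * φ3 * φm3)) φm1 = 0 := by
      rw [show (fun t => (a * z * χ + mφ * φ3) * t
          + (μ^2 * z + (m/2) * χ^2 + b * z * φ3 * φm3)) = (fun t => W z χ t φ3 φm3) from
        funext fun t => by rw [hW]; ring]
      exact h3
    rwa [deriv_affine'] at this
  have e4 : b * z * φm3 + mφ * φm1 = 0 := by
    have : deriv (fun t => (b * z * φm3 + mφ * φm1) * t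
        + (μ^2 * z + (m/2) * χ^2 + a * z * χ * φm1)) φ3 = 0 := by
      rw [show (fun t => (b * z * φm3 + mφ * φm1) * t
          + (μ^2 * z + (m/2) * χ^2 + a * z * χ * φm1)) = (fun t => W z χ φm1 t φm3) from
        funext fun t => by rw [hW]; ring]
      exact h4
    rwa [deriv_affine'] at this
  have e5 : b * z * φ3 = 0 := by
    have : deriv (fun t => (b * z * φ3) * t
        + (μ^2 * z + (m/2) * χ^2 + a * z * χ * φm1 + mφ * φm1 * φ3)) φm3 = 0 := by
      rw [show (fun t => (b * z * φ3) * t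
          + (μ^2 * z + (m/2) * χ^2 + a * z * χ * φm1 + mφ * φm1 * φ3)) = (fun t => W z χ φm1 φ3 t) from
        funext fun t => by rw [hW]; ring]
      exact h5
    rwa [deriv_affine'] at this
  -- case analysis
  rcases mul_eq_zero.mp e5 with h | hφ3
  · rcases mul_eq_zero.mp h with h | hz
    · exact hb h
    · -- z = 0
      subst hz
      have hχ : χ = 0 := by
        have := e2; simp [hm] at this
        exact this
      have hφ3 : φ3 = 0 := by
        have := e3; rw [hχ] at this; simp at this
        rcases this with h | h
        · exact absurd h hmφ
        · exact h
      have hφm1 : φm1 = 0 := by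
        have := e4; simp at this
        rcases this with h | h
        · exact absurd h hmφ
        · exact h
      rw [hχ, hφm1, hφ3] at e1
      simp at e1
      exact hμ e1
  · -- φ3 = 0
    subst hφ3
    rcases mul_eq_zero.mp (by simpa using e3 : a * z * χ = 0) with h | hχ
    · rcases mul_eq_zero.mp h with h | hz
      · exact ha h
      · -- z = 0
        subst hz
        have hχ : χ = 0 := by
          have := e2; simp [hm] at this
          exact this
        have hφm1 : φm1 = 0 := by
          have := e4; simp at this
          rcases this with h | h
          · exact absurd h hmφ
          · exact h
        rw [hχ, hφm1] at e1
        simp at e1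
        exact hμ e1
    · -- χ = 0
      subst hχ
      simp at e1
      exact hμ e1
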